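/- Let m ≥ 3 and t ≥ 3. Let A be an m-bit string and B a t-bit string with S[A,3] = P[B,3]. Let S be an m-bit string with D_m(S,A) ≤ 1 and T a t-bit string with D_t(T,B) ≤ 1. Let b₂ and b₃ be integers with |b₂| ≤ 1 and |b₃| ≤ 1 such that P[T,3] +_3 b₂ = P[B,3] and S[S,3] +_3 b₃ = P[B,3]. Define the (m+t−3)-bit strings S' = (S +_m (b₃ − b₂)) ∘ S[T, t−3] and A' = A ∘ S[B, t−3]. Then D_{m+t−3}(S', A') = D_t(T, B). -/

import Mathlib

/-- Distance `D_n(x,y) = min(|x-y|, 2^n - |x-y|)` on n-bit strings (as naturals < 2^n). -/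
def D (n x y : ℕ) : ℤ := min |(x : ℤ) - (y : ℤ)| (2 ^ n - |(x : ℤ) - (y : ℤ)|)

/-- Wrap-around addition `x +_n c`: the unique natural in [0, 2^n) congruent to x + c mod 2^n. -/
def wadd (n : ℕ) (x : ℕ) (c : ℤ) : ℕ := (((x : ℤ) + c) % (2 ^ n : ℤ)).toNat

/-- `P[x,k]`: the k-bit prefix of the n-bit string x. -/
def pre (n k x : ℕ) : ℕ := x / 2 ^ (n - k)

/-- `S[x,k]`: the k-bit suffix of x. -/
def suf (k x : ℕ) : ℕ := x % 2 ^ k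

/-- Catenation of an m-bit string x with a t-bit string y. -/
def cat (t x y : ℕ) : ℕ := x * 2 ^ t + y

/-!
Let `d ≡ S - A (mod 2^m)` and `e ≡ T - B (mod 2^t)` be the signed offsets with `|d| = D_m(S,A)`
and `|e| = D_t(T,B)`. Since the last three bits of `A` are the first three bits of `B`,
comparing them with the last three bits of `S` forces `b₃ = -d`, so the high part `S +_m (b₃ - b₂)`
of `S'` differs from `A` by `-b₂` modulo `2^m`. Comparing the first three bits of `T` and `B`
shows that their low `t - 3` bits differ by exactly `e + b₂ 2^(t-3)`: the prefix correction `b₂`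
is the carry. The two contributions to `S' - A'` cancel up to `e` modulo `2^(m+t-3)`.
-/

theorem D_eq_abs_of_modEq {n x y : ℕ} {e : ℤ} (hx : x < 2 ^ n) (hy : y < 2 ^ n)
    (he : 2 * |e| ≤ 2 ^ n) (hxy : (x : ℤ) - y ≡ e [ZMOD 2 ^ n]) : D n x y = |e| := by
  obtain ⟨k, hk⟩ := hxy.dvd
  have hx' : (x : ℤ) < 2 ^ n := mod_cast hx
  have hy' : (y : ℤ) < 2 ^ n := mod_cast hy
  unfold D
  generalize (2 : ℤ) ^ n = c at *
  -- `x - y` is one of `e`, `e - 2^n`, `e + 2^n`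
  obtain ⟨hk1, hk2⟩ : -1 ≤ k ∧ k ≤ 1 := by
    constructor <;> nlinarith [le_abs_self e, neg_abs_le e]
  interval_cases k <;> rcases abs_cases ((x : ℤ) - y) with ⟨h1, _⟩ | ⟨h1, _⟩ <;>
    rcases abs_cases e with ⟨h3, _⟩ | ⟨h3, _⟩ <;> rw [h1, h3] <;> omega

theorem exists_abs_eq_D_modEq {n x y : ℕ} (hx : x < 2 ^ n) (hy : y < 2 ^ n) :
    ∃ e : ℤ, |e| = D n x y ∧ (x : ℤ) - y ≡ e [ZMOD 2 ^ n] := by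
  have hx' : (x : ℤ) < 2 ^ n := mod_cast hx
  have hy' : (y : ℤ) < 2 ^ n := mod_cast hy
  unfold D
  rcases le_total |(x : ℤ) - y| (2 ^ n - |(x : ℤ) - y|) with h | h
  · exact ⟨(x : ℤ) - y, (min_eq_left h).symm, .refl _⟩
  · rw [min_eq_right h]
    rcases le_total (y : ℤ) x with hxy | hxy
    · refine ⟨x - y - 2 ^ n, ?_, Int.modEq_iff_dvd.mpr ⟨-1, by ring⟩⟩
      rw [abs_of_nonneg (sub_nonneg.mpr hxy), abs_of_nonpos (by linarith)]
      ring
    · refine ⟨x - y + 2 ^ n, ?_, Int.modEq_iff_dvd.mpr ⟨1, by ring⟩⟩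
      rw [abs_of_nonpos (sub_nonpos.mpr hxy), abs_of_nonneg (by linarith)]
      ring

theorem wadd_lt (n x : ℕ) (c : ℤ) : wadd n x c < 2 ^ n := by
  rw [wadd, ← Nat.cast_lt (α := ℤ), Int.toNat_of_nonneg (Int.emod_nonneg _ (by positivity))]
  exact_mod_cast Int.emod_lt_of_pos _ (by positivity)

theorem wadd_modEq (n x : ℕ) (c : ℤ) : (wadd n x c : ℤ) ≡ x + c [ZMOD 2 ^ n] := by
  rw [wadd, Int.toNat_of_nonneg (Int.emod_nonneg _ (by positivity))]
  exact Int.mod_modEq _ _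

theorem suf_modEq (k x : ℕ) : (suf k x : ℤ) ≡ x [ZMOD 2 ^ k] := by
  simpa [suf] using Int.mod_modEq (x : ℤ) (2 ^ k)

theorem suf_lt (k x : ℕ) : suf k x < 2 ^ k :=
  Nat.mod_lt x (Nat.two_pow_pos k)

theorem cat_lt {m k x y : ℕ} (hx : x < 2 ^ m) (hy : y < 2 ^ k) : cat k x y < 2 ^ (m + k) :=
  calc x * 2 ^ k + y < (x + 1) * 2 ^ k := by linarith
    _ ≤ 2 ^ m * 2 ^ k := Nat.mul_le_mul_right _ hx
    _ = 2 ^ (m + k) := (pow_add 2 m k).symm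

theorem cat_pre_suf (n k x : ℕ) : cat (n - k) (pre n k x) (suf (n - k) x) = x :=
  Nat.div_add_mod' x _

theorem cat_sub_cat_modEq {m k x x' y y' : ℕ} {c : ℤ} (h : (x : ℤ) - x' ≡ c [ZMOD 2 ^ m]) :
    (cat k x y : ℤ) - cat k x' y' ≡ c * 2 ^ k + (y - y') [ZMOD 2 ^ (m + k)] := by
  have := (h.mul_right' (c := 2 ^ k)).add_right ((y : ℤ) - y')
  rw [← pow_add] at this
  convert this using 1
  push_cast [cat]
  ring

theorem eq_neg_of_suf_add_modEq {m k S A : ℕ} {d b : ℤ} (hk : 2 ≤ k) (hkm : k ≤ m)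
    (hd : |d| ≤ 1) (hb : |b| ≤ 1) (hSA : (S : ℤ) - A ≡ d [ZMOD 2 ^ m])
    (hsuf : (suf k S : ℤ) + b ≡ suf k A [ZMOD 2 ^ k]) : b = -d := by
  have hSbA : (S : ℤ) + b ≡ A [ZMOD 2 ^ k] :=
    ((suf_modEq k S).symm.add_right b).trans (hsuf.trans (suf_modEq k A))
  obtain ⟨u, hu⟩ := hSbA.dvd
  obtain ⟨v, hv⟩ := (hSA.of_dvd (pow_dvd_pow 2 hkm)).dvd
  have hdvd : (2 : ℤ) ^ k ∣ b + d := ⟨v - u, by linear_combination hv - hu⟩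
  have h4 : (2 : ℤ) ^ 2 ≤ 2 ^ k := pow_le_pow_right₀ (by norm_num) hk
  have hlt : |b + d| < 2 ^ k := by
    rw [abs_lt]; constructor <;> linarith [abs_le.mp hd, abs_le.mp hb]
  linarith [Int.eq_zero_of_abs_lt_dvd hdvd hlt]

theorem suf_sub_suf_eq {n k T B : ℕ} {e b : ℤ} (hk : 2 ≤ k) (hkn : k ≤ n)
    (he : |e| ≤ 1) (hb : |b| ≤ 1) (hTB : (T : ℤ) - B ≡ e [ZMOD 2 ^ n])
    (hpre : (pre n k T : ℤ) + b ≡ pre n k B [ZMOD 2 ^ k]) :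
    (suf (n - k) T : ℤ) - suf (n - k) B = e + b * 2 ^ (n - k) := by
  have hn : (2 : ℤ) ^ n = 2 ^ k * 2 ^ (n - k) := by rw [← pow_add, Nat.add_sub_cancel' hkn]
  have hT : (T : ℤ) = pre n k T * 2 ^ (n - k) + suf (n - k) T := by
    exact_mod_cast (cat_pre_suf n k T).symm
  have hB : (B : ℤ) = pre n k B * 2 ^ (n - k) + suf (n - k) B := by
    exact_mod_cast (cat_pre_suf n k B).symm
  obtain ⟨u, hu⟩ := hTB.dvd
  obtain ⟨v, hv⟩ := hpre.dvd
  have hdvd : (2 : ℤ) ^ k * 2 ^ (n - k) ∣ e + b * 2 ^ (n - k) - (suf (n - k) T - suf (n - k) B) :=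
    ⟨u - v, by linear_combination hu + hT - hB - 2 ^ (n - k) * hv + u * hn⟩
  have hN : (1 : ℤ) ≤ 2 ^ (n - k) := one_le_pow₀ (by norm_num)
  have h4N : (2 : ℤ) ^ 2 * 2 ^ (n - k) ≤ 2 ^ k * 2 ^ (n - k) := by gcongr; norm_num
  have hbN : |b * 2 ^ (n - k)| ≤ 2 ^ (n - k) := by
    rw [abs_mul, abs_of_pos (pow_pos two_pos _ : (0 : ℤ) < 2 ^ (n - k))]
    exact mul_le_of_le_one_left (by positivity) hb
  have hsT : (suf (n - k) T : ℤ) < 2 ^ (n - k) := by exact_mod_cast suf_lt (n - k) T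
  have hsB : (suf (n - k) B : ℤ) < 2 ^ (n - k) := by exact_mod_cast suf_lt (n - k) B
  have hlt : |e + b * 2 ^ (n - k) - (suf (n - k) T - suf (n - k) B)| < 2 ^ k * 2 ^ (n - k) := by
    rw [abs_lt]
    constructor <;> linarith [abs_le.mp he, abs_le.mp hbN, (suf (n - k) T).cast_nonneg (α := ℤ),
      (suf (n - k) B).cast_nonneg (α := ℤ)]
  linarith [Int.eq_zero_of_abs_lt_dvd hdvd hlt]

/-- the corrected catenation is at the same distance from `A'` as `T` is
    from `B`: `D_{m+t-3}(S',A') = D_t(T,B)`. -/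
theorem stmt_14 (m t : ℕ) (hm : 3 ≤ m) (ht : 3 ≤ t)
    (A B : ℕ) (hA : A < 2 ^ m) (hB : B < 2 ^ t) (hAB : suf 3 A = pre t 3 B)
    (S : ℕ) (hS : S < 2 ^ m) (hSA : D m S A ≤ 1)
    (T : ℕ) (hT : T < 2 ^ t) (hTB : D t T B ≤ 1)
    (b₂ b₃ : ℤ) (hb₂ : |b₂| ≤ 1) (hb₃ : |b₃| ≤ 1)
    (h₂ : wadd 3 (pre t 3 T) b₂ = pre t 3 B) (h₃ : wadd 3 (suf 3 S) b₃ = pre t 3 B) :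
    D (m + t - 3)
        (cat (t - 3) (wadd m S (b₃ - b₂)) (suf (t - 3) T))
        (cat (t - 3) A (suf (t - 3) B)) = D t T B := by
  obtain ⟨d, hd, hSA'⟩ := exists_abs_eq_D_modEq hS hA
  obtain ⟨e, he, hTB'⟩ := exists_abs_eq_D_modEq hT hB
  rw [← hd] at hSA
  rw [← he] at hTB ⊢
  have hb₃d : b₃ = -d := eq_neg_of_suf_add_modEq (by norm_num) hm hSA hb₃ hSA' <| by
    rw [hAB, ← h₃]; exact (wadd_modEq _ _ _).symm
  have hlow : (suf (t - 3) T : ℤ) - suf (t - 3) B = e + b₂ * 2 ^ (t - 3) :=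
    suf_sub_suf_eq (by norm_num) ht hTB hb₂ hTB' <| by rw [← h₂]; exact (wadd_modEq _ _ _).symm
  have hhigh : (wadd m S (b₃ - b₂) : ℤ) - A ≡ -b₂ [ZMOD 2 ^ m] :=
    calc (wadd m S (b₃ - b₂) : ℤ) - A ≡ S + (b₃ - b₂) - A [ZMOD 2 ^ m] :=
          (wadd_modEq _ _ _).sub_right _
      _ = (S - A) - d - b₂ := by rw [hb₃d]; ring
      _ ≡ d - d - b₂ [ZMOD 2 ^ m] := (hSA'.sub_right _).sub_right _
      _ = -b₂ := by ring
  have hcat := cat_sub_cat_modEq (k := t - 3) (y := suf (t - 3) T) (y' := suf (t - 3) B) hhigh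
  rw [hlow, show -b₂ * 2 ^ (t - 3) + (e + b₂ * 2 ^ (t - 3)) = e by ring] at hcat
  have he2 : 2 * |e| ≤ 2 ^ (m + (t - 3)) := by
    linarith [le_self_pow₀ (M₀ := ℤ) (a := 2) (by norm_num) (by omega : m + (t - 3) ≠ 0)]
  rw [Nat.add_sub_assoc ht]
  exact D_eq_abs_of_modEq (cat_lt (wadd_lt _ _ _) (suf_lt _ T)) (cat_lt hA (suf_lt _ B)) he2 hcat
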